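/- arXiv:2209.13845 — 2 statements merged into one kernel-verified Lean document; each statement's English description precedes it below -/
import Mathlib

section
/- Let g : Ω → ℂ^L, z̃ : Ω → ℂ^N and H̃ : Ω → ℂ^{N×L} be mutually independent random objects on a probability space, each with square-integrable entries and entrywise zero mean, and set R_g = E[g g^H] ∈ ℂ^{L×L}, R_z = E[z̃ z̃^H] ∈ ℂ^{N×N}, and Σ_{l,l'} = E[h_l h_{l'}^H] ∈ ℂ^{N×N} for 1 ≤ l, l' ≤ L, where h_l denotes the l-th column of H̃. Let H̄ ∈ ℂ^{N×L}, z̄ ∈ ℂ^N, Φ ∈ ℂ^{N×N} be deterministic and θ ∈ ℝ. Define the random vector õ = g + H̄^H Φ z̃ + H̃^H Φ z̄ exp(jθ) + H̃^H Φ z̃ ∈ ℂ^L. Then E[õ õ^H] = R_g + H̄^H Φ R_z Φ^H H̄ + Q¹ + Q², where Q¹, Q² ∈ ℂ^{L×L} have entries [Q¹]_{l,l'} = tr(Φ z̄ z̄^H Φ^H Σ_{l',l}) and [Q²]_{l,l'} = tr(Φ R_z Φ^H Σ_{l',l}). -/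
/-!
With `M = H̄ᴴ Φ` and `y = Φ (e^{jθ} z̄ + z̃)`, a function of `z̃`, the channel is
`õ = g + M z̃ + H̃ᴴ y`. The three summands are pairwise uncorrelated: each cross term contains a
zero-mean factor (`g` or `H̃`) that is independent of the rest. So `E[õ õᴴ]` is the sum of
`E[g gᴴ] = R_g`, `E[M z̃ z̃ᴴ Mᴴ] = M R_z Mᴴ` and `E[H̃ᴴ y yᴴ H̃]`. In the last one the independence of
`H̃` and `y` factorizes the fourth moments, `E[(H̃ᴴ y)_l (H̃ᴴ y)_{l'}^*] = tr(E[y yᴴ] Σ_{l',l})`, and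
`E[y yᴴ] = Φ (z̄ z̄ᴴ + R_z) Φᴴ` because `|e^{jθ}| = 1` and `z̃` has mean zero. All these products are
integrable because the product of two independent square-integrable variables is square-integrable.
-/

open MeasureTheory ProbabilityTheory Matrix

/-- Entrywise expectation of a random matrix. -/
noncomputable def matExp {Ω : Type*} [MeasureSpace Ω] {m n : Type*}
    (X : Ω → Matrix m n ℂ) : Matrix m n ℂ :=
  Matrix.of fun i j => ∫ ω, X ω i j

/-- Outer product `x yᴴ`. -/
def outer {m n : Type*} (x : m → ℂ) (y : n → ℂ) : Matrix m n ℂ :=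
  Matrix.of fun i j => x i * star (y j)

noncomputable instance {m n : Type*} : MeasurableSpace (Matrix m n ℂ) :=
  inferInstanceAs (MeasurableSpace (m → n → ℂ))

theorem ProbabilityTheory.IndepFun.memLp_two_mul {Ω : Type*} {mΩ : MeasurableSpace Ω}
    {μ : Measure Ω} {X Y : Ω → ℂ} (h : IndepFun X Y μ) (hX : MemLp X 2 μ) (hY : MemLp Y 2 μ) :
    MemLp (fun ω => X ω * Y ω) 2 μ := by
  have hsq : Measurable fun z : ℂ => ‖z‖ ^ 2 := by fun_prop
  rw [memLp_two_iff_integrable_sq_norm (f := fun ω => X ω * Y ω) (hX.1.mul hY.1)]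
  simp_rw [norm_mul, mul_pow]
  exact (h.comp hsq hsq).integrable_mul ((memLp_two_iff_integrable_sq_norm hX.1).1 hX)
    ((memLp_two_iff_integrable_sq_norm hY.1).1 hY)

lemma outer_smul_smul {m n : Type*} (c d : ℂ) (x : m → ℂ) (y : n → ℂ) :
    outer (c • x) (d • y) = (c * star d) • outer x y := by
  ext i j
  simp only [outer, of_apply, Pi.smul_apply, Matrix.smul_apply, smul_eq_mul, star_mul']
  ring

section CrossCorrelation

variable {Ω : Type*} [MeasureSpace Ω] {m n k : Type*}

noncomputable def crossCorr (x : Ω → m → ℂ) (y : Ω → n → ℂ) : Matrix m n ℂ :=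
  matExp fun ω => outer (x ω) (y ω)

lemma crossCorr_apply (x : Ω → m → ℂ) (y : Ω → n → ℂ) (i : m) (j : n) :
    crossCorr x y i j = ∫ ω, x ω i * star (y ω j) :=
  rfl

lemma integrable_mul_star_of_memLp_two {f h : Ω → ℂ} (hf : MemLp f 2) (hh : MemLp h 2) :
    Integrable (fun ω => f ω * star (h ω)) :=
  hf.integrable_mul hh.star

lemma conjTranspose_crossCorr (x : Ω → m → ℂ) (y : Ω → n → ℂ) :
    (crossCorr x y)ᴴ = crossCorr y x := by
  ext i j
  rw [conjTranspose_apply, crossCorr_apply, crossCorr_apply, ← starRingEnd_apply, ← integral_conj]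
  simp only [map_mul, starRingEnd_apply, star_star, mul_comm]

lemma crossCorr_add_left {x x' : Ω → m → ℂ} {y : Ω → n → ℂ}
    (hx : ∀ i, MemLp (fun ω => x ω i) 2) (hx' : ∀ i, MemLp (fun ω => x' ω i) 2)
    (hy : ∀ j, MemLp (fun ω => y ω j) 2) :
    crossCorr (fun ω => x ω + x' ω) y = crossCorr x y + crossCorr x' y := by
  ext i j
  simp only [crossCorr_apply, Matrix.add_apply, Pi.add_apply, add_mul]
  exact integral_add (integrable_mul_star_of_memLp_two (hx i) (hy j))
    (integrable_mul_star_of_memLp_two (hx' i) (hy j))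

lemma crossCorr_add_right {x : Ω → m → ℂ} {y y' : Ω → n → ℂ}
    (hx : ∀ i, MemLp (fun ω => x ω i) 2) (hy : ∀ j, MemLp (fun ω => y ω j) 2)
    (hy' : ∀ j, MemLp (fun ω => y' ω j) 2) :
    crossCorr x (fun ω => y ω + y' ω) = crossCorr x y + crossCorr x y' := by
  rw [← conjTranspose_crossCorr, crossCorr_add_left hy hy' hx, conjTranspose_add,
    conjTranspose_crossCorr, conjTranspose_crossCorr]

lemma crossCorr_mulVec_left [Fintype k] (A : Matrix m k ℂ) {x : Ω → k → ℂ} {y : Ω → n → ℂ}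
    (hx : ∀ i, MemLp (fun ω => x ω i) 2) (hy : ∀ j, MemLp (fun ω => y ω j) 2) :
    crossCorr (fun ω => A *ᵥ x ω) y = A * crossCorr x y := by
  ext i j
  simp only [crossCorr_apply, mul_apply, mulVec, dotProduct, Finset.sum_mul, mul_assoc]
  rw [integral_finsetSum _ fun a _ => (integrable_mul_star_of_memLp_two (hx a) (hy j)).const_mul _]
  simp only [integral_const_mul]

lemma crossCorr_mulVec_right [Fintype k] (B : Matrix n k ℂ) {x : Ω → m → ℂ} {y : Ω → k → ℂ}
    (hx : ∀ i, MemLp (fun ω => x ω i) 2) (hy : ∀ j, MemLp (fun ω => y ω j) 2) :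
    crossCorr x (fun ω => B *ᵥ y ω) = crossCorr x y * Bᴴ := by
  rw [← conjTranspose_crossCorr, crossCorr_mulVec_left B hy hx, conjTranspose_mul,
    conjTranspose_crossCorr]

lemma memLp_two_mulVec [Fintype k] (A : Matrix m k ℂ) {x : Ω → k → ℂ}
    (hx : ∀ i, MemLp (fun ω => x ω i) 2) (i : m) :
    MemLp (fun ω => (A *ᵥ x ω) i) 2 :=
  memLp_finsetSum _ fun a _ => (hx a).const_mul (A i a)

lemma crossCorr_add_self_of_crossCorr_eq_zero {x y : Ω → m → ℂ}
    (hx : ∀ i, MemLp (fun ω => x ω i) 2) (hy : ∀ i, MemLp (fun ω => y ω i) 2)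
    (hxy : crossCorr x y = 0) :
    crossCorr (fun ω => x ω + y ω) (fun ω => x ω + y ω) = crossCorr x x + crossCorr y y := by
  have hxy' : ∀ i, MemLp (fun ω => (x ω + y ω) i) 2 := fun i => (hx i).add (hy i)
  rw [crossCorr_add_left hx hy hxy', crossCorr_add_right hx hx hy, crossCorr_add_right hy hx hy,
    ← conjTranspose_crossCorr x y, hxy, conjTranspose_zero, add_zero, zero_add]

lemma crossCorr_add_add_self_of_crossCorr_eq_zero {x y w : Ω → m → ℂ}
    (hx : ∀ i, MemLp (fun ω => x ω i) 2) (hy : ∀ i, MemLp (fun ω => y ω i) 2)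
    (hw : ∀ i, MemLp (fun ω => w ω i) 2) (hxy : crossCorr x y = 0) (hxw : crossCorr x w = 0)
    (hyw : crossCorr y w = 0) :
    crossCorr (fun ω => x ω + y ω + w ω) (fun ω => x ω + y ω + w ω)
      = crossCorr x x + crossCorr y y + crossCorr w w := by
  have hxy' : ∀ i, MemLp (fun ω => (x ω + y ω) i) 2 := fun i => (hx i).add (hy i)
  rw [crossCorr_add_self_of_crossCorr_eq_zero hxy' hw
      (by rw [crossCorr_add_left hx hy hw, hxw, hyw, add_zero]),
    crossCorr_add_self_of_crossCorr_eq_zero hx hy hxy]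

lemma crossCorr_const_add_self [IsProbabilityMeasure (volume : Measure Ω)] (c : m → ℂ)
    {x : Ω → m → ℂ} (hx : ∀ i, MemLp (fun ω => x ω i) 2) (hx0 : ∀ i, ∫ ω, x ω i = 0) :
    crossCorr (fun ω => c + x ω) (fun ω => c + x ω) = outer c c + crossCorr x x := by
  have hxc : crossCorr x (fun _ => c) = 0 := by
    ext i j
    simp [crossCorr_apply, integral_mul_const, hx0]
  rw [crossCorr_add_self_of_crossCorr_eq_zero (fun i => memLp_const (c i)) hx]
  · congr 1
    ext i j
    simp [crossCorr_apply, outer]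
  · rw [← conjTranspose_crossCorr, hxc, conjTranspose_zero]

lemma crossCorr_mulVec_smul_add_self [IsProbabilityMeasure (volume : Measure Ω)] [Fintype k]
    (A : Matrix m k ℂ) {c : ℂ} (hc : c * star c = 1) (v : k → ℂ) {x : Ω → k → ℂ}
    (hx : ∀ i, MemLp (fun ω => x ω i) 2) (hx0 : ∀ i, ∫ ω, x ω i = 0) :
    crossCorr (fun ω => A *ᵥ (c • v + x ω)) (fun ω => A *ᵥ (c • v + x ω))
      = A * outer v v * Aᴴ + A * crossCorr x x * Aᴴ := by
  have hcx : ∀ i, MemLp (fun ω => (c • v + x ω) i) 2 := fun i =>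
    (memLp_const ((c • v) i)).add (hx i)
  rw [crossCorr_mulVec_left _ hcx (memLp_two_mulVec A hcx), crossCorr_mulVec_right _ hcx hcx,
    crossCorr_const_add_self _ hx hx0, outer_smul_smul, hc, one_smul]
  simp only [Matrix.add_mul, Matrix.mul_add, Matrix.mul_assoc]

end CrossCorrelation

lemma measurable_matrix_apply {m n : Type*} (i : m) (j : n) :
    Measurable fun M : Matrix m n ℂ => M i j :=
  (measurable_pi_apply j).comp (measurable_pi_apply i)

section Independence

variable {Ω : Type*} [MeasureSpace Ω] {m n k : Type*}

lemma crossCorr_eq_zero_of_indepFun {x : Ω → m → ℂ} {y : Ω → n → ℂ} (h : IndepFun x y)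
    (hx : ∀ i, AEStronglyMeasurable (fun ω => x ω i))
    (hy : ∀ j, AEStronglyMeasurable (fun ω => y ω j)) (hx0 : ∀ i, ∫ ω, x ω i = 0) :
    crossCorr x y = 0 := by
  ext i j
  have hij : IndepFun (fun ω => x ω i) (fun ω => star (y ω j)) :=
    h.comp (measurable_pi_apply i) (continuous_star.measurable.comp (measurable_pi_apply j))
  rw [crossCorr_apply, hij.integral_fun_mul_eq_mul_integral (hx i) (hy j).star, hx0 i, zero_mul,
    Matrix.zero_apply]

lemma memLp_two_conjTranspose_mulVec [Fintype k] {X : Ω → Matrix k m ℂ} {y : Ω → k → ℂ}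
    (h : IndepFun X y) (hX : ∀ a i, MemLp (fun ω => X ω a i) 2)
    (hy : ∀ a, MemLp (fun ω => y ω a) 2) (i : m) :
    MemLp (fun ω => ((X ω)ᴴ *ᵥ y ω) i) 2 := by
  simp only [mulVec, dotProduct, conjTranspose_apply]
  exact memLp_finsetSum _ fun a _ =>
    (h.comp (φ := fun M : Matrix k m ℂ => star (M a i)) (ψ := fun v : k → ℂ => v a)
      (continuous_star.measurable.comp (measurable_matrix_apply a i))
      (measurable_pi_apply a)).memLp_two_mul (hX a i).star (hy a)

lemma crossCorr_conjTranspose_mulVec_self [Fintype k] {X : Ω → Matrix k m ℂ} {y : Ω → k → ℂ}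
    (h : IndepFun X y) (hX : ∀ a i, MemLp (fun ω => X ω a i) 2)
    (hy : ∀ a, MemLp (fun ω => y ω a) 2) (i j : m) :
    crossCorr (fun ω => (X ω)ᴴ *ᵥ y ω) (fun ω => (X ω)ᴴ *ᵥ y ω) i j
      = (crossCorr y y * crossCorr (fun ω a => X ω a j) (fun ω a => X ω a i)).trace := by
  have hind : ∀ a b, IndepFun (fun ω => y ω a * star (y ω b))
      (fun ω => X ω b j * star (X ω a i)) := fun a b =>
    h.symm.comp (φ := fun v : k → ℂ => v a * star (v b))
      (ψ := fun M : Matrix k m ℂ => M b j * star (M a i))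
      (by fun_prop) ((measurable_matrix_apply b j).mul
        (continuous_star.measurable.comp (measurable_matrix_apply a i)))
  have hint : ∀ a b, Integrable
      (fun ω => y ω a * star (y ω b) * (X ω b j * star (X ω a i))) := fun a b =>
    (hind a b).integrable_mul (integrable_mul_star_of_memLp_two (hy a) (hy b))
      (integrable_mul_star_of_memLp_two (hX b j) (hX a i))
  calc crossCorr (fun ω => (X ω)ᴴ *ᵥ y ω) (fun ω => (X ω)ᴴ *ᵥ y ω) i j
      = ∫ ω, ∑ a, ∑ b, y ω a * star (y ω b) * (X ω b j * star (X ω a i)) := by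
        rw [crossCorr_apply]
        congr 1 with ω
        simp only [mulVec, dotProduct, conjTranspose_apply, star_sum, star_mul', star_star,
          Finset.sum_mul_sum]
        exact Finset.sum_congr rfl fun a _ => Finset.sum_congr rfl fun b _ => by ring
    _ = ∑ a, ∑ b, (∫ ω, y ω a * star (y ω b)) * ∫ ω, X ω b j * star (X ω a i) := by
        rw [integral_finsetSum _ fun a _ => integrable_finsetSum _ fun b _ => hint a b]
        refine Finset.sum_congr rfl fun a _ => ?_
        rw [integral_finsetSum _ fun b _ => hint a b]
        exact Finset.sum_congr rfl fun b _ =>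
          (hind a b).integral_fun_mul_eq_mul_integral
            ((hy a).1.mul (hy b).1.star) ((hX b j).1.mul (hX a i).1.star)
    _ = _ := by
        simp only [trace, diag, mul_apply, crossCorr_apply]

lemma crossCorr_conjTranspose_mulVec_eq_zero [Fintype k] {u : Ω → n → ℂ}
    {X : Ω → Matrix k m ℂ} {y : Ω → k → ℂ} (h : IndepFun (fun ω => (u ω, y ω)) X)
    (hu : ∀ l, MemLp (fun ω => u ω l) 2) (hX : ∀ a i, Integrable (fun ω => X ω a i))
    (hy : ∀ a, MemLp (fun ω => y ω a) 2) (hX0 : ∀ a i, ∫ ω, X ω a i = 0) :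
    crossCorr u (fun ω => (X ω)ᴴ *ᵥ y ω) = 0 := by
  ext l i
  have hind : ∀ a, IndepFun (fun ω => u ω l * star (y ω a)) (fun ω => X ω a i) := fun a =>
    h.comp (φ := fun p : (n → ℂ) × (k → ℂ) => p.1 l * star (p.2 a))
      (ψ := fun M : Matrix k m ℂ => M a i) (by fun_prop) (measurable_matrix_apply a i)
  have hint : ∀ a, Integrable (fun ω => u ω l * star (y ω a) * X ω a i) := fun a =>
    (hind a).integrable_mul (integrable_mul_star_of_memLp_two (hu l) (hy a)) (hX a i)
  calc crossCorr u (fun ω => (X ω)ᴴ *ᵥ y ω) l i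
      = ∫ ω, ∑ a, u ω l * star (y ω a) * X ω a i := by
        rw [crossCorr_apply]
        congr 1 with ω
        simp only [mulVec, dotProduct, conjTranspose_apply, star_sum, star_mul', star_star,
          Finset.mul_sum]
        exact Finset.sum_congr rfl fun a _ => by ring
    _ = 0 := by
        rw [integral_finsetSum _ fun a _ => hint a]
        refine Finset.sum_eq_zero fun a _ => ?_
        rw [(hind a).integral_fun_mul_eq_mul_integral ((hu l).1.mul (hy a).1.star) (hX a i).1,
          hX0 a i, mul_zero]

lemma crossCorr_add_mulVec_add_conjTranspose_mulVec [IsFiniteMeasure (volume : Measure Ω)]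
    [Fintype k] [Fintype n] {g : Ω → m → ℂ} {z : Ω → k → ℂ} {H : Ω → Matrix n m ℂ}
    (hg : ∀ i, MemLp (fun ω => g ω i) 2) (hz : ∀ a, MemLp (fun ω => z ω a) 2)
    (hH : ∀ a i, MemLp (fun ω => H ω a i) 2) (hg0 : ∀ i, ∫ ω, g ω i = 0)
    (hH0 : ∀ a i, ∫ ω, H ω a i = 0) (hgz : IndepFun g z)
    (hgzH : IndepFun (fun ω => (g ω, z ω)) H) (M : Matrix m k ℂ) {F : (k → ℂ) → n → ℂ}
    (hF : Measurable F) (hy : ∀ a, MemLp (fun ω => F (z ω) a) 2) :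
    crossCorr (fun ω => g ω + M *ᵥ z ω + (H ω)ᴴ *ᵥ F (z ω))
        (fun ω => g ω + M *ᵥ z ω + (H ω)ᴴ *ᵥ F (z ω))
      = crossCorr g g + M * crossCorr z z * Mᴴ
        + of fun i j => (crossCorr (fun ω => F (z ω)) (fun ω => F (z ω))
            * crossCorr (fun ω a => H ω a j) (fun ω a => H ω a i)).trace := by
  have hHy : IndepFun H fun ω => F (z ω) :=
    (hgzH.comp (hF.comp measurable_snd) measurable_id).symm
  have hMz : ∀ i, MemLp (fun ω => (M *ᵥ z ω) i) 2 := memLp_two_mulVec M hz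
  have hH1 : ∀ a i, Integrable (fun ω => H ω a i) := fun a i => (hH a i).integrable one_le_two
  have hgMz : crossCorr g (fun ω => M *ᵥ z ω) = 0 := by
    rw [crossCorr_mulVec_right _ hg hz, crossCorr_eq_zero_of_indepFun hgz
      (fun i => (hg i).1) (fun a => (hz a).1) hg0, Matrix.zero_mul]
  have hgHy : crossCorr g (fun ω => (H ω)ᴴ *ᵥ F (z ω)) = 0 :=
    crossCorr_conjTranspose_mulVec_eq_zero
      (hgzH.comp (measurable_fst.prodMk (hF.comp measurable_snd)) measurable_id) hg hH1 hy hH0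
  have hzHy : crossCorr z (fun ω => (H ω)ᴴ *ᵥ F (z ω)) = 0 :=
    crossCorr_conjTranspose_mulVec_eq_zero
      (hgzH.comp (measurable_snd.prodMk (hF.comp measurable_snd)) measurable_id) hz hH1 hy hH0
  have hHy2 := memLp_two_conjTranspose_mulVec hHy hH hy
  rw [crossCorr_add_add_self_of_crossCorr_eq_zero hg hMz hHy2 hgMz hgHy
    (by rw [crossCorr_mulVec_left _ hz hHy2, hzHy, Matrix.mul_zero]),
    crossCorr_mulVec_left _ hz hMz, crossCorr_mulVec_right _ hz hz, ← Matrix.mul_assoc]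
  congr 1
  ext i j
  exact crossCorr_conjTranspose_mulVec_self hHy hH hy i j

end Independence

lemma exp_ofReal_mul_I_mul_star (θ : ℝ) :
    Complex.exp (θ * Complex.I) * star (Complex.exp (θ * Complex.I)) = 1 := by
  rw [← starRingEnd_apply, RCLike.mul_conj, Complex.norm_exp_ofReal_mul_I]
  simp

/-- Mutual independence of `g, z̃, H̃` is encoded as `g ⊥ z̃` together with `(g, z̃) ⊥ H̃`. -/
theorem covariance_of_aggregated_channel
    {Ω : Type*} [MeasureSpace Ω] [IsProbabilityMeasure (volume : Measure Ω)]
    (L N : ℕ)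
    (g : Ω → Fin L → ℂ) (zt : Ω → Fin N → ℂ) (Ht : Ω → Matrix (Fin N) (Fin L) ℂ)
    -- square-integrable entries
    (hg2 : ∀ i, MemLp (fun ω => g ω i) 2 volume)
    (hz2 : ∀ i, MemLp (fun ω => zt ω i) 2 volume)
    (hH2 : ∀ i l, MemLp (fun ω => Ht ω i l) 2 volume)
    -- entrywise zero mean
    (hg0 : ∀ i, ∫ ω, g ω i = 0)
    (hz0 : ∀ i, ∫ ω, zt ω i = 0)
    (hH0 : ∀ i l, ∫ ω, Ht ω i l = 0)
    -- mutual independence of g, z̃, H̃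
    (hind1 : IndepFun g zt volume)
    (hind2 : IndepFun (fun ω => (g ω, zt ω)) Ht volume)
    -- second-order statistics
    (Rg : Matrix (Fin L) (Fin L) ℂ)
    (hRg : Rg = matExp (fun ω => outer (g ω) (g ω)))
    (Rz : Matrix (Fin N) (Fin N) ℂ)
    (hRz : Rz = matExp (fun ω => outer (zt ω) (zt ω)))
    (Sig : Fin L → Fin L → Matrix (Fin N) (Fin N) ℂ)
    (hSig : ∀ l l', Sig l l'
      = matExp (fun ω => outer (fun i => Ht ω i l) (fun i => Ht ω i l')))
    -- deterministic quantities
    (Hbar : Matrix (Fin N) (Fin L) ℂ) (zbar : Fin N → ℂ)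
    (Phi : Matrix (Fin N) (Fin N) ℂ) (θ : ℝ)
    -- the random vector õ
    (ot : Ω → Fin L → ℂ)
    (hot : ot = fun ω => g ω + Hbarᴴ *ᵥ (Phi *ᵥ zt ω)
        + Complex.exp (θ * Complex.I) • ((Ht ω)ᴴ *ᵥ (Phi *ᵥ zbar))
        + (Ht ω)ᴴ *ᵥ (Phi *ᵥ zt ω))
    -- the matrices Q¹ and Q²
    (Q1 Q2 : Matrix (Fin L) (Fin L) ℂ)
    (hQ1 : ∀ l l', Q1 l l' = (Phi * outer zbar zbar * Phiᴴ * Sig l' l).trace)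
    (hQ2 : ∀ l l', Q2 l l' = (Phi * Rz * Phiᴴ * Sig l' l).trace) :
    matExp (fun ω => outer (ot ω) (ot ω))
      = Rg + Hbarᴴ * Phi * Rz * Phiᴴ * Hbar + Q1 + Q2 := by
  have he := exp_ofReal_mul_I_mul_star θ
  generalize Complex.exp (θ * Complex.I) = e at hot he
  set F : (Fin N → ℂ) → Fin N → ℂ := fun v => Phi *ᵥ (e • zbar + v)
  have hF : Measurable F := by unfold F; fun_prop
  have hot' : ot = fun ω => g ω + (Hbarᴴ * Phi) *ᵥ zt ω + (Ht ω)ᴴ *ᵥ F (zt ω) := by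
    rw [hot]
    ext1 ω
    simp only [F, mulVec_add, mulVec_smul, mulVec_mulVec, add_assoc]
  have hy : ∀ a, MemLp (fun ω => F (zt ω) a) 2 :=
    memLp_two_mulVec Phi fun a => (memLp_const ((e • zbar) a)).add (hz2 a)
  have hQ : (of fun l l' => (crossCorr (fun ω => F (zt ω)) (fun ω => F (zt ω))
      * crossCorr (fun ω a => Ht ω a l') (fun ω a => Ht ω a l)).trace) = Q1 + Q2 := by
    ext l l'
    rw [of_apply, crossCorr_mulVec_smul_add_self Phi he zbar hz2 hz0, Matrix.add_apply, hQ1, hQ2,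
      hSig, hRz, Matrix.add_mul, trace_add]
    rfl
  show crossCorr ot ot = _
  rw [hot', crossCorr_add_mulVec_add_conjTranspose_mulVec hg2 hz2 hH2 hg0 hH0 hind1 hind2 _ hF hy,
    hQ, hRg, hRz, conjTranspose_mul, conjTranspose_conjTranspose, ← add_assoc]
  simp only [Matrix.mul_assoc]
  rfl
end

section
/- Under the pilot model below, let k, i ∈ S with k ≠ i, and assume in addition that φ_k and φ_i are independent of each other and each is uniformly distributed on [−π, π]. Then E[ô_i^H ô_k] = √(p̂_k p̂_i) · τ_p · tr(R_k Ψ^{-1} R_i), where ô_i = ō_i exp(jφ_i) + √(p̂_i) R_i Ψ^{-1}(y − ȳ). -/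
open MeasureTheory ProbabilityTheory Matrix

/-!
Write `v := y - ȳ = ∑ⱼ √p̂ⱼ τ_p õⱼ + n`. The summands are independent and centred, so
`E[v vᴴ] = ∑ⱼ p̂ⱼ τ_p² Rⱼ + τ_p σ² I = τ_p Ψ`. Each estimate is a LoS term `e^{jφ} ō` plus the
linear image `√p̂ R Ψ⁻¹ v`. A uniform phase has `E[e^{jφ}] = 0`, and the phases are independent of each
other and of `v`, so in `E[ô_iᴴ ô_k] = tr E[ô_k ô_iᴴ]` every term containing a LoS part vanishes;
what remains is `√(p̂_k p̂_i) tr (R_k Ψ⁻¹ (τ_p Ψ) Ψ⁻¹ R_i) = √(p̂_k p̂_i) τ_p tr (R_k Ψ⁻¹ R_i)`.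
-/

section Outer

variable {m n p q : Type*}

lemma outer_add_left (x x' : m → ℂ) (y : n → ℂ) :
    outer (x + x') y = outer x y + outer x' y := by
  ext; simp [outer, add_mul]

lemma outer_add_right (x : m → ℂ) (y y' : n → ℂ) :
    outer x (y + y') = outer x y + outer x y' := by
  ext; simp [outer, mul_add]

lemma outer_zero_left (y : n → ℂ) : outer (0 : m → ℂ) y = 0 := by
  ext; simp [outer]

lemma outer_zero_right (x : m → ℂ) : outer x (0 : n → ℂ) = 0 := by
  ext; simp [outer]

lemma outer_sum_smul_sum_smul {ι : Type*} [Fintype ι] (a : ι → ℂ) (x : ι → m → ℂ) :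
    outer (∑ j, a j • x j) (∑ j, a j • x j) =
      ∑ j, ∑ j', (a j * star (a j')) • outer (x j) (x j') := by
  ext
  simp only [outer, of_apply, Finset.sum_apply, Pi.smul_apply, smul_eq_mul, star_sum, star_mul',
    Finset.sum_mul_sum, Matrix.sum_apply, Matrix.smul_apply]
  exact Fintype.sum_congr _ _ fun j => Fintype.sum_congr _ _ fun j' => by ring

lemma outer_mulVec_mulVec [Fintype m] [Fintype n] (A : Matrix p m ℂ) (B : Matrix q n ℂ)
    (x : m → ℂ) (y : n → ℂ) : outer (A *ᵥ x) (B *ᵥ y) = A * outer x y * Bᴴ := by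
  change vecMulVec (A *ᵥ x) (star (B *ᵥ y)) = A * vecMulVec x (star y) * Bᴴ
  rw [mul_vecMulVec, vecMulVec_mul, star_mulVec]

lemma star_dotProduct_eq_trace_outer [Fintype m] (x y : m → ℂ) :
    star x ⬝ᵥ y = trace (outer y x) := by
  simp [dotProduct, trace, outer, mul_comm]

end Outer

section MatExp

variable {Ω m n p q : Type*} [MeasureSpace Ω]

lemma matExp_add {X Y : Ω → Matrix m n ℂ} (hX : ∀ a b, Integrable (fun ω => X ω a b))
    (hY : ∀ a b, Integrable (fun ω => Y ω a b)) :
    matExp (fun ω => X ω + Y ω) = matExp X + matExp Y := by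
  ext a b
  exact integral_add (hX a b) (hY a b)

lemma matExp_sum {ι : Type*} (s : Finset ι) {X : ι → Ω → Matrix m n ℂ}
    (hX : ∀ j ∈ s, ∀ a b, Integrable (fun ω => X j ω a b)) :
    matExp (fun ω => ∑ j ∈ s, X j ω) = ∑ j ∈ s, matExp (X j) := by
  ext a b
  simp only [matExp, of_apply, Matrix.sum_apply]
  exact integral_finsetSum s fun j hj => hX j hj a b

lemma matExp_smul (c : ℂ) (X : Ω → Matrix m n ℂ) :
    matExp (fun ω => c • X ω) = c • matExp X := by
  ext a b
  exact integral_const_mul c _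

lemma matExp_mul_mul [Fintype m] [Fintype n] (A : Matrix p m ℂ) (B : Matrix n q ℂ)
    {X : Ω → Matrix m n ℂ} (hX : ∀ a b, Integrable (fun ω => X ω a b)) :
    matExp (fun ω => A * X ω * B) = A * matExp X * B := by
  ext a b
  simp only [matExp, of_apply, mul_apply]
  rw [integral_finsetSum _ fun d _ => (integrable_finsetSum _ fun c _ =>
    ((hX c d).const_mul _)).mul_const _]
  refine Finset.sum_congr rfl fun d _ => ?_
  rw [integral_mul_const, integral_finsetSum _ fun c _ => (hX c d).const_mul _]
  simp only [integral_const_mul]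

lemma integral_trace_eq_trace_matExp [Fintype m] {X : Ω → Matrix m m ℂ}
    (hX : ∀ a b, Integrable (fun ω => X ω a b)) :
    ∫ ω, trace (X ω) = trace (matExp X) :=
  integral_finsetSum _ fun a _ => hX a a

lemma matExp_outer_of_indepFun {X : Ω → m → ℂ} {Y : Ω → n → ℂ}
    (hXY : IndepFun X Y volume) (hX : AEStronglyMeasurable X volume)
    (hY : AEStronglyMeasurable Y volume) :
    matExp (fun ω => outer (X ω) (Y ω)) =
      outer (fun a => ∫ ω, X ω a) (fun b => ∫ ω, Y ω b) := by
  ext a b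
  simp only [matExp, outer, of_apply, RCLike.star_def, ← integral_conj]
  exact (hXY.comp (measurable_pi_apply a)
    (continuous_star.measurable.comp (measurable_pi_apply b))).integral_fun_mul_eq_mul_integral
    ((continuous_apply a).comp_aestronglyMeasurable hX)
    (continuous_star.comp_aestronglyMeasurable ((continuous_apply b).comp_aestronglyMeasurable hY))

lemma integrable_outer_apply [Fintype m] [Fintype n] {X : Ω → m → ℂ} {Y : Ω → n → ℂ}
    (hX : MemLp X 2 volume) (hY : MemLp Y 2 volume) (a : m) (b : n) :
    Integrable (fun ω => outer (X ω) (Y ω) a b) := by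
  have hYb : MemLp (fun ω => star (Y ω b)) 2 volume := (memLp_pi_iff.1 hY b).star
  exact (memLp_pi_iff.1 hX a).integrable_mul hYb

end MatExp

lemma MeasureTheory.MemLp.mulVec {Ω m n : Type*} [MeasurableSpace Ω] {μ : Measure Ω}
    [Fintype m] [Fintype n] {v : Ω → n → ℂ} {p : ENNReal} (hv : MemLp v p μ)
    (A : Matrix m n ℂ) :
    MemLp (fun ω => A *ᵥ v ω) p μ :=
  memLp_pi_iff.2 fun a => memLp_finsetSum _ fun b _ => (memLp_pi_iff.1 hv b).const_mul (A a b)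

section SecondMoments

variable {Ω m : Type*} [MeasureSpace Ω] [Fintype m]

lemma integral_star_dotProduct_eq_trace_matExp {u w : Ω → m → ℂ} (hu : MemLp u 2 volume)
    (hw : MemLp w 2 volume) :
    ∫ ω, star (u ω) ⬝ᵥ w ω = trace (matExp fun ω => outer (w ω) (u ω)) := by
  simp_rw [star_dotProduct_eq_trace_outer]
  exact integral_trace_eq_trace_matExp (integrable_outer_apply hw hu)

lemma matExp_outer_add_add {u u' w w' : Ω → m → ℂ} (hu : MemLp u 2 volume)
    (hu' : MemLp u' 2 volume) (hw : MemLp w 2 volume) (hw' : MemLp w' 2 volume) :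
    matExp (fun ω => outer (u ω + u' ω) (w ω + w' ω)) =
      matExp (fun ω => outer (u ω) (w ω)) + matExp (fun ω => outer (u ω) (w' ω)) +
        (matExp (fun ω => outer (u' ω) (w ω)) + matExp (fun ω => outer (u' ω) (w' ω))) := by
  have huw := integrable_outer_apply hu hw
  have huw' := integrable_outer_apply hu hw'
  have hu'w := integrable_outer_apply hu' hw
  have hu'w' := integrable_outer_apply hu' hw'
  simp_rw [outer_add_left, outer_add_right]
  rw [matExp_add (X := fun ω => outer (u ω) (w ω) + outer (u ω) (w' ω))
      (Y := fun ω => outer (u' ω) (w ω) + outer (u' ω) (w' ω))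
      (fun a b => (huw a b).add (huw' a b)) (fun a b => (hu'w a b).add (hu'w' a b)),
    matExp_add huw huw', matExp_add hu'w hu'w']

lemma matExp_outer_mulVec_mulVec {v : Ω → m → ℂ} (hv : MemLp v 2 volume) {p q : Type*}
    (A : Matrix p m ℂ) (B : Matrix q m ℂ) :
    matExp (fun ω => outer (A *ᵥ v ω) (B *ᵥ v ω)) =
      A * matExp (fun ω => outer (v ω) (v ω)) * Bᴴ := by
  simp_rw [outer_mulVec_mulVec]
  exact matExp_mul_mul A Bᴴ (integrable_outer_apply hv hv)

lemma matExp_outer_sum_smul_of_iIndepFun {ι : Type*} [Fintype ι] (c : ι → ℂ)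
    {X : ι → Ω → m → ℂ} (hX : ∀ j, MemLp (X j) 2 volume)
    (hX0 : ∀ j b, ∫ ω, X j ω b = 0) (hind : iIndepFun X volume) :
    matExp (fun ω => outer (∑ j, c j • X j ω) (∑ j, c j • X j ω)) =
      ∑ j, (c j * star (c j)) • matExp (fun ω => outer (X j ω) (X j ω)) := by
  classical
  have hcross : ∀ j j', j' ≠ j → matExp (fun ω => outer (X j ω) (X j' ω)) = 0 := by
    intro j j' hne
    rw [matExp_outer_of_indepFun (hind.indepFun hne.symm) (hX j).1 (hX j').1]
    ext
    simp [outer, hX0]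
  have hint : ∀ j j' a b,
      Integrable (fun ω => ((c j * star (c j')) • outer (X j ω) (X j' ω)) a b) :=
    fun j j' a b => (integrable_outer_apply (hX j) (hX j') a b).const_mul _
  simp_rw [outer_sum_smul_sum_smul]
  rw [matExp_sum (X := fun j ω => ∑ j', (c j * star (c j')) • outer (X j ω) (X j' ω)) _
    fun j _ a b => by
      simpa only [Matrix.sum_apply] using integrable_finsetSum _ fun j' _ => hint j j' a b]
  refine Finset.sum_congr rfl fun j _ => ?_
  rw [matExp_sum _ fun j' _ => hint j j',
    Fintype.sum_eq_single j fun j' hne => by rw [matExp_smul, hcross j j' hne, smul_zero],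
    matExp_smul]

lemma matExp_outer_sum_smul_add_of_iIndepFun {S : Type*} [Fintype S] (c : S → ℂ)
    {Z : S → Ω → m → ℂ} {N : Ω → m → ℂ} (hZ : ∀ i, MemLp (Z i) 2 volume)
    (hZ0 : ∀ i a, ∫ ω, Z i ω a = 0) (hN : MemLp N 2 volume) (hN0 : ∀ a, ∫ ω, N ω a = 0)
    (hind : iIndepFun (fun j : Option S => fun ω => j.elim (N ω) fun i => Z i ω) volume) :
    matExp (fun ω => outer (∑ i, c i • Z i ω + N ω) (∑ i, c i • Z i ω + N ω)) =
      ∑ i, (c i * star (c i)) • matExp (fun ω => outer (Z i ω) (Z i ω)) +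
        matExp (fun ω => outer (N ω) (N ω)) := by
  have h := matExp_outer_sum_smul_of_iIndepFun (fun j : Option S => j.elim 1 c)
    (X := fun j ω => j.elim (N ω) fun i => Z i ω) (by rintro (_ | i); exacts [hN, hZ i])
    (by rintro (_ | i); exacts [hN0, hZ0 i]) hind
  simpa [Fintype.sum_option, add_comm] using h

end SecondMoments

noncomputable def uniformPhaseMeasure : Measure ℝ :=
  (ENNReal.ofReal (2 * Real.pi))⁻¹ • volume.restrict (Set.Icc (-Real.pi) Real.pi)

lemma uniformPhaseMeasure_ne_zero : uniformPhaseMeasure ≠ 0 := by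
  simp [uniformPhaseMeasure, Real.pi_pos, ENNReal.mul_eq_top]

lemma integral_cexp_mul_I_uniformPhaseMeasure :
    ∫ t, Complex.exp (t * Complex.I) ∂uniformPhaseMeasure = 0 := by
  rw [uniformPhaseMeasure, integral_smul_measure, integral_Icc_eq_integral_Ioc,
    ← intervalIntegral.integral_of_le (by linarith [Real.pi_pos])]
  simp_rw [mul_comm _ Complex.I]
  rw [integral_exp_mul_complex Complex.I_ne_zero]
  have h : Complex.exp (Complex.I * Real.pi) = Complex.exp (Complex.I * (-Real.pi : ℝ)) := by
    push_cast
    rw [mul_neg, Complex.exp_neg, mul_comm, Complex.exp_pi_mul_I]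
    norm_num
  rw [h, sub_self, zero_div, smul_zero]

section Phase

variable {Ω : Type*} [MeasurableSpace Ω] {μ : Measure Ω} {φ : Ω → ℝ}

lemma aemeasurable_of_map_eq_uniformPhaseMeasure (hφ : μ.map φ = uniformPhaseMeasure) :
    AEMeasurable φ μ :=
  AEMeasurable.of_map_ne_zero (hφ ▸ uniformPhaseMeasure_ne_zero)

lemma integral_cexp_mul_I_of_map_eq_uniformPhaseMeasure (hφ : μ.map φ = uniformPhaseMeasure) :
    ∫ ω, Complex.exp (φ ω * Complex.I) ∂μ = 0 := by
  rw [← integral_cexp_mul_I_uniformPhaseMeasure, ← hφ,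
    integral_map (aemeasurable_of_map_eq_uniformPhaseMeasure hφ) (by fun_prop)]

lemma memLp_cexp_mul_I_smul [IsFiniteMeasure μ] {m : Type*} [Fintype m] (hφ : AEMeasurable φ μ)
    (x : m → ℂ) (p : ENNReal) :
    MemLp (fun ω => Complex.exp (φ ω * Complex.I) • x) p μ :=
  MemLp.of_bound (by fun_prop) ‖x‖ (Filter.Eventually.of_forall fun ω => by
    simp [norm_smul, Complex.norm_exp_ofReal_mul_I])

end Phase

lemma integral_star_dotProduct_of_uniformPhase {Ω m n : Type*} [MeasureSpace Ω]
    [IsFiniteMeasure (volume : Measure Ω)] [Fintype m] [Fintype n]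
    {ψ ψ' : Ω → ℝ} (hψ : volume.map ψ = uniformPhaseMeasure)
    (hψ' : volume.map ψ' = uniformPhaseMeasure) (hψψ' : IndepFun ψ ψ' volume)
    {v : Ω → n → ℂ} (hv : MemLp v 2 volume) (hψv : IndepFun ψ v volume)
    (hψ'v : IndepFun ψ' v volume) (x x' : m → ℂ) (A A' : Matrix m n ℂ) :
    ∫ ω, star (Complex.exp (ψ' ω * Complex.I) • x' + A' *ᵥ v ω) ⬝ᵥ
        (Complex.exp (ψ ω * Complex.I) • x + A *ᵥ v ω) =
      trace (A * matExp (fun ω => outer (v ω) (v ω)) * A'ᴴ) := by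
  have hψm := aemeasurable_of_map_eq_uniformPhaseMeasure hψ
  have hψ'm := aemeasurable_of_map_eq_uniformPhaseMeasure hψ'
  have hex := memLp_cexp_mul_I_smul hψm x 2
  have hex' := memLp_cexp_mul_I_smul hψ'm x' 2
  have hmean : ∀ {φ : Ω → ℝ}, volume.map φ = uniformPhaseMeasure → ∀ y : m → ℂ,
      (fun a => ∫ ω, (Complex.exp (φ ω * Complex.I) • y) a) = 0 := fun hφ y => by
    ext a
    simp [integral_mul_const, integral_cexp_mul_I_of_map_eq_uniformPhaseMeasure hφ]
  have hsmul : ∀ y : m → ℂ, Measurable fun t : ℝ => Complex.exp (t * Complex.I) • y := by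
    intro y; fun_prop
  have hmulVec : ∀ B : Matrix m n ℂ, Measurable fun z : n → ℂ => B *ᵥ z :=
    fun B => (Continuous.matrix_mulVec continuous_const continuous_id).measurable
  have hLoS : IndepFun (fun ω => Complex.exp (ψ ω * Complex.I) • x)
      (fun ω => Complex.exp (ψ' ω * Complex.I) • x') volume := hψψ'.comp (hsmul x) (hsmul x')
  have hLoSv : IndepFun (fun ω => Complex.exp (ψ ω * Complex.I) • x)
      (fun ω => A' *ᵥ v ω) volume := hψv.comp (hsmul x) (hmulVec A')
  have hvLoS : IndepFun (fun ω => A *ᵥ v ω)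
      (fun ω => Complex.exp (ψ' ω * Complex.I) • x') volume :=
    hψ'v.symm.comp (hmulVec A) (hsmul x')
  have hest : ∀ {φ : Ω → ℝ} (y : m → ℂ) (B : Matrix m n ℂ), AEMeasurable φ →
      MemLp (fun ω => Complex.exp (φ ω * Complex.I) • y + B *ᵥ v ω) 2 volume :=
    fun y B hφ => (memLp_cexp_mul_I_smul hφ y 2).add (hv.mulVec B)
  rw [integral_star_dotProduct_eq_trace_matExp (hest x' A' hψ'm) (hest x A hψm),
    matExp_outer_add_add hex (hv.mulVec A) hex' (hv.mulVec A'),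
    matExp_outer_of_indepFun hLoS hex.1 hex'.1,
    matExp_outer_of_indepFun hLoSv hex.1 (hv.mulVec A').1,
    matExp_outer_of_indepFun hvLoS (hv.mulVec A).1 hex'.1,
    matExp_outer_mulVec_mulVec hv, hmean hψ, hmean hψ', outer_zero_left, outer_zero_left,
    outer_zero_right, zero_add, zero_add, zero_add]

lemma mul_inv_mul_mul_conjTranspose_mul_inv {m : Type*} [Fintype m] [DecidableEq m]
    {Ψ : Matrix m m ℂ} (hΨ : Ψ.IsHermitian) (hΨu : IsUnit Ψ) (R : Matrix m m ℂ)
    {R' : Matrix m m ℂ} (hR' : R'.IsHermitian) :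
    R * Ψ⁻¹ * Ψ * (R' * Ψ⁻¹)ᴴ = R * Ψ⁻¹ * R' := by
  rw [conjTranspose_mul, conjTranspose_nonsing_inv, hΨ.eq, hR'.eq, Matrix.mul_assoc R,
    nonsing_inv_mul _ ((isUnit_iff_isUnit_det Ψ).1 hΨu), Matrix.mul_one, Matrix.mul_assoc]

lemma trace_smul_mul_inv_mul_smul_mul_conjTranspose {m : Type*} [Fintype m]
    [DecidableEq m]
    {Ψ : Matrix m m ℂ} (hΨ : Ψ.IsHermitian) (hΨu : IsUnit Ψ) (R : Matrix m m ℂ)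
    {R' : Matrix m m ℂ} (hR' : R'.IsHermitian) (a a' t : ℝ) :
    trace ((a : ℂ) • (R * Ψ⁻¹) * ((t : ℂ) • Ψ) * ((a' : ℂ) • (R' * Ψ⁻¹))ᴴ) =
      ((a * a' * t : ℝ) : ℂ) * trace (R * Ψ⁻¹ * R') := by
  simp only [conjTranspose_smul, smul_mul_assoc, mul_smul_comm, trace_smul, smul_eq_mul,
    mul_inv_mul_mul_conjTranspose_mul_inv hΨ hΨu R hR', Complex.star_def, Complex.conj_ofReal]
  push_cast
  ring

lemma matExp_outer_pilot_residual {Ω S : Type*} [MeasureSpace Ω] [Fintype S] {L : ℕ}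
    {τp σ2 : ℝ} {phat : S → ℝ} (hphat : ∀ i, 0 ≤ phat i)
    {R : S → Matrix (Fin L) (Fin L) ℂ}
    {otil : S → Ω → Fin L → ℂ} (hotil2 : ∀ i, MemLp (otil i) 2 volume)
    (hotil0 : ∀ i l, ∫ ω, otil i ω l = 0)
    (hotilR : ∀ i, matExp (fun ω => outer (otil i ω) (otil i ω)) = R i)
    {n : Ω → Fin L → ℂ} (hn2 : MemLp n 2 volume) (hn0 : ∀ l, ∫ ω, n ω l = 0)
    (hnR : matExp (fun ω => outer (n ω) (n ω)) = ((τp * σ2 : ℝ) : ℂ) • 1)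
    (hindep : iIndepFun (fun j : Option S => fun ω => j.elim (n ω) fun i => otil i ω) volume) :
    matExp (fun ω => outer (∑ i, ((Real.sqrt (phat i) * τp : ℝ) : ℂ) • otil i ω + n ω)
        (∑ i, ((Real.sqrt (phat i) * τp : ℝ) : ℂ) • otil i ω + n ω)) =
      (τp : ℂ) • ((∑ i, ((phat i * τp : ℝ) : ℂ) • R i) + (σ2 : ℂ) • 1) := by
  rw [matExp_outer_sum_smul_add_of_iIndepFun _ hotil2 hotil0 hn2 hn0 hindep, hnR, smul_add,
    Finset.smul_sum]
  simp only [hotilR, smul_smul, Complex.star_def, Complex.conj_ofReal]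
  congr 1
  · refine Finset.sum_congr rfl fun i _ => congrArg (· • R i) ?_
    rw [← Complex.ofReal_mul, mul_mul_mul_comm, Real.mul_self_sqrt (hphat i)]
    push_cast
    ring
  · push_cast
    ring_nf

theorem cross_correlation_of_estimates_general
    {Ω S : Type*} [MeasureSpace Ω] [IsProbabilityMeasure (volume : Measure Ω)] [Fintype S]
    (L : ℕ)
    (τp σ2 : ℝ)
    (phat : S → ℝ) (hphat : ∀ i, 0 < phat i)
    -- deterministic LoS parts and Hermitian covariance matrices
    (obar : S → Fin L → ℂ)
    (R : S → Matrix (Fin L) (Fin L) ℂ) (hR : ∀ i, (R i).IsHermitian)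
    -- zero-mean square-integrable NLoS channel parts with covariance `R i`
    (otil : S → Ω → Fin L → ℂ)
    (hotil2 : ∀ i l, MemLp (fun ω => otil i ω l) 2 volume)
    (hotil0 : ∀ i l, (∫ ω, otil i ω l) = 0)
    (hotilR : ∀ i, matExp (fun ω => outer (otil i ω) (otil i ω)) = R i)
    -- random phases
    (φ : S → Ω → ℝ)
    -- zero-mean square-integrable noise with covariance `τp σ2 I`
    (n : Ω → Fin L → ℂ)
    (hn2 : ∀ l, MemLp (fun ω => n ω l) 2 volume)
    (hn0 : ∀ l, (∫ ω, n ω l) = 0)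
    (hnR : matExp (fun ω => outer (n ω) (n ω))
      = ((τp * σ2 : ℝ) : ℂ) • (1 : Matrix (Fin L) (Fin L) ℂ))
    -- the family {õ_i : i ∈ S} ∪ {n} is mutually independent
    (hindep : iIndepFun
      (fun j : Option S => fun ω => j.elim (n ω) (fun i => otil i ω)) volume)
    -- the tuple (φ_i)_{i ∈ S} is independent of all the õ_i and n
    (hφindep : IndepFun (fun ω => fun i : S => φ i ω)
      (fun ω => fun j : Option S => j.elim (n ω) (fun i => otil i ω)) volume)
    -- received pilot signal and its mean
    (y ybar : Ω → Fin L → ℂ)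
    (hy : y = fun ω => (∑ i, ((Real.sqrt (phat i) * τp : ℝ) : ℂ) •
        (Complex.exp ((φ i ω : ℂ) * Complex.I) • obar i + otil i ω)) + n ω)
    (hybar : ybar = fun ω => ∑ i, ((Real.sqrt (phat i) * τp : ℝ) : ℂ) •
        (Complex.exp ((φ i ω : ℂ) * Complex.I) • obar i))
    -- the matrix Ψ, assumed invertible
    (Ψ : Matrix (Fin L) (Fin L) ℂ)
    (hΨ : Ψ = (∑ i, ((phat i * τp : ℝ) : ℂ) • R i) + (σ2 : ℂ) • 1)
    (hΨunit : IsUnit Ψ)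
    (k : S)
    -- the phase-aware MMSE channel estimate of UE k
    (ohat : Ω → Fin L → ℂ)
    (hohat : ohat = fun ω => Complex.exp ((φ k ω : ℂ) * Complex.I) • obar k
        + ((Real.sqrt (phat k) : ℝ) : ℂ) • ((R k * Ψ⁻¹) *ᵥ (y ω - ybar ω)))
    (i : S)
    -- φ_k and φ_i are independent of each other and uniformly distributed on [−π, π]
    (hφki : IndepFun (φ k) (φ i) volume)
    (hφkU : Measure.map (φ k) volume
      = (ENNReal.ofReal (2 * Real.pi))⁻¹ • (volume.restrict (Set.Icc (-Real.pi) Real.pi)))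
    (hφiU : Measure.map (φ i) volume
      = (ENNReal.ofReal (2 * Real.pi))⁻¹ • (volume.restrict (Set.Icc (-Real.pi) Real.pi)))
    -- the phase-aware MMSE channel estimate of UE i
    (ohati : Ω → Fin L → ℂ)
    (hohati : ohati = fun ω => Complex.exp ((φ i ω : ℂ) * Complex.I) • obar i
        + ((Real.sqrt (phat i) : ℝ) : ℂ) • ((R i * Ψ⁻¹) *ᵥ (y ω - ybar ω))) :
    (∫ ω, star (ohati ω) ⬝ᵥ ohat ω)
      = ((Real.sqrt (phat k * phat i) * τp : ℝ) : ℂ) * (R k * Ψ⁻¹ * R i).trace := by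
  set v : Ω → Fin L → ℂ :=
    fun ω => ∑ j, ((Real.sqrt (phat j) * τp : ℝ) : ℂ) • otil j ω + n ω
  have hv : ∀ ω, y ω - ybar ω = v ω := fun ω => by
    simp only [hy, hybar, v, smul_add, Finset.sum_add_distrib]
    abel
  have hvL2 : MemLp v 2 volume := (memLp_finsetSum _ fun j _ =>
    (memLp_pi_iff.2 (hotil2 j)).const_smul ((Real.sqrt (phat j) * τp : ℝ) : ℂ)).add
      (memLp_pi_iff.2 hn2)
  have hφv : ∀ j, IndepFun (φ j) v volume := fun j =>
    hφindep.comp (measurable_pi_apply j) (show Measurable fun z : Option S → Fin L → ℂ =>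
      ∑ j, ((Real.sqrt (phat j) * τp : ℝ) : ℂ) • z (some j) + z none by fun_prop)
  have hcov : matExp (fun ω => outer (v ω) (v ω)) = (τp : ℂ) • Ψ :=
    hΨ ▸ matExp_outer_pilot_residual (fun j => (hphat j).le)
      (fun j => memLp_pi_iff.2 (hotil2 j)) hotil0 hotilR (memLp_pi_iff.2 hn2) hn0 hnR hindep
  have hΨH : Ψ.IsHermitian := by
    rw [hΨ]
    exact (isSelfAdjoint_sum _ fun j _ => (hR j).smul (Complex.conj_ofReal _)).add
      (isHermitian_one.smul (Complex.conj_ofReal _))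
  subst hohat hohati
  simp only [hv, ← smul_mulVec]
  rw [integral_star_dotProduct_of_uniformPhase hφkU hφiU hφki hvL2 (hφv k) (hφv i), hcov,
    trace_smul_mul_inv_mul_smul_mul_conjTranspose hΨH hΨunit _ (hR i),
    Real.sqrt_mul (hphat k).le]

/-- Equation (32) in Appendix B of the paper: for two pilot-sharing UEs `k ≠ i` with
independent uniform phases on `[−π, π]`,
`E[ô_iᴴ ô_k] = √(p̂_k p̂_i) τ_p tr (R_k Ψ⁻¹ R_i)`. -/
theorem cross_correlation_of_estimates
    {Ω S : Type*} [MeasureSpace Ω] [IsProbabilityMeasure (volume : Measure Ω)] [Fintype S]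
    (L : ℕ) (hL : 1 ≤ L)
    (τp σ2 : ℝ) (hτp : 0 < τp) (hσ2 : 0 < σ2)
    (phat : S → ℝ) (hphat : ∀ i, 0 < phat i)
    -- deterministic LoS parts and Hermitian covariance matrices
    (obar : S → Fin L → ℂ)
    (R : S → Matrix (Fin L) (Fin L) ℂ) (hR : ∀ i, (R i).IsHermitian)
    -- zero-mean square-integrable NLoS channel parts with covariance `R i`
    (otil : S → Ω → Fin L → ℂ)
    (hotil2 : ∀ i l, MemLp (fun ω => otil i ω l) 2 volume)
    (hotil0 : ∀ i l, (∫ ω, otil i ω l) = 0)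
    (hotilR : ∀ i, matExp (fun ω => outer (otil i ω) (otil i ω)) = R i)
    -- random phases
    (φ : S → Ω → ℝ)
    -- zero-mean square-integrable noise with covariance `τp σ2 I`
    (n : Ω → Fin L → ℂ)
    (hn2 : ∀ l, MemLp (fun ω => n ω l) 2 volume)
    (hn0 : ∀ l, (∫ ω, n ω l) = 0)
    (hnR : matExp (fun ω => outer (n ω) (n ω))
      = ((τp * σ2 : ℝ) : ℂ) • (1 : Matrix (Fin L) (Fin L) ℂ))
    -- the family {õ_i : i ∈ S} ∪ {n} is mutually independent
    (hindep : iIndepFun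
      (fun j : Option S => fun ω => j.elim (n ω) (fun i => otil i ω)) volume)
    -- the tuple (φ_i)_{i ∈ S} is independent of all the õ_i and n
    (hφindep : IndepFun (fun ω => fun i : S => φ i ω)
      (fun ω => fun j : Option S => j.elim (n ω) (fun i => otil i ω)) volume)
    -- received pilot signal and its mean
    (y ybar : Ω → Fin L → ℂ)
    (hy : y = fun ω => (∑ i, ((Real.sqrt (phat i) * τp : ℝ) : ℂ) •
        (Complex.exp ((φ i ω : ℂ) * Complex.I) • obar i + otil i ω)) + n ω)
    (hybar : ybar = fun ω => ∑ i, ((Real.sqrt (phat i) * τp : ℝ) : ℂ) •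
        (Complex.exp ((φ i ω : ℂ) * Complex.I) • obar i))
    -- the matrix Ψ, assumed invertible
    (Ψ : Matrix (Fin L) (Fin L) ℂ)
    (hΨ : Ψ = (∑ i, ((phat i * τp : ℝ) : ℂ) • R i) + (σ2 : ℂ) • 1)
    (hΨunit : IsUnit Ψ)
    (k : S)
    -- the phase-aware MMSE channel estimate of UE k
    (ohat : Ω → Fin L → ℂ)
    (hohat : ohat = fun ω => Complex.exp ((φ k ω : ℂ) * Complex.I) • obar k
        + ((Real.sqrt (phat k) : ℝ) : ℂ) • ((R k * Ψ⁻¹) *ᵥ (y ω - ybar ω)))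
    (i : S) (hki : k ≠ i)
    -- φ_k and φ_i are independent of each other and uniformly distributed on [−π, π]
    (hφki : IndepFun (φ k) (φ i) volume)
    (hφkU : Measure.map (φ k) volume
      = (ENNReal.ofReal (2 * Real.pi))⁻¹ • (volume.restrict (Set.Icc (-Real.pi) Real.pi)))
    (hφiU : Measure.map (φ i) volume
      = (ENNReal.ofReal (2 * Real.pi))⁻¹ • (volume.restrict (Set.Icc (-Real.pi) Real.pi)))
    -- the phase-aware MMSE channel estimate of UE i
    (ohati : Ω → Fin L → ℂ)
    (hohati : ohati = fun ω => Complex.exp ((φ i ω : ℂ) * Complex.I) • obar i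
        + ((Real.sqrt (phat i) : ℝ) : ℂ) • ((R i * Ψ⁻¹) *ᵥ (y ω - ybar ω))) :
    (∫ ω, star (ohati ω) ⬝ᵥ ohat ω)
      = ((Real.sqrt (phat k * phat i) * τp : ℝ) : ℂ) * (R k * Ψ⁻¹ * R i).trace :=
  cross_correlation_of_estimates_general L τp σ2 phat hphat obar R hR otil hotil2 hotil0 hotilR φ n
    hn2 hn0 hnR hindep hφindep y ybar hy hybar Ψ hΨ hΨunit k ohat hohat i hφki hφkU hφiU ohati
    hohati
end
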